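/- arXiv:1902.07024 — 2 statements merged into one kernel-verified Lean document; each statement's English description precedes it below -/
import Mathlib

section
/- Let A ∈ C^{n×n×p} be a complex tensor and let f(z) = Σ_{k=0}^∞ aₖ z^k be a complex power series with convergence radius ρ. If every T-eigenvalue λ of A satisfies |λ| < ρ, then the tensor power series Σ_{k=0}^∞ aₖ A^k converges, and the T-eigenvalues of the limit are Σ_{k=0}^∞ aₖ λ^k for each T-eigenvalue λ of A. -/
/-!
The block circulant map `bcirc` turns the T-product into the matrix product, so `tpow A k` is
the first block column of `bcirc A ^ k` and everything reduces to the matrix `M = bcirc A`.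
By Gelfand's formula `‖M ^ k‖ ≤ t ^ k` eventually for any `t` above the spectral radius, and
taking `t < ρ` makes `Σ aₖ Mᵏ` absolutely convergent. Its sum lies in the algebra `ℂ[M]`,
which is finite-dimensional and hence closed, so it equals `q(M)` for a polynomial `q`.
Applying both to an eigenvector shows `q(λ) = Σ aₖ λᵏ` for every eigenvalue `λ`, and the
spectral mapping theorem for polynomials gives the spectrum of the sum.
-/

open Matrix Kronecker Complex Polynomial

noncomputable section

/-- Block circulant matrix of a third-order tensor given by its frontal slices. -/
def bcirc {m n p : ℕ} (A : Fin p → Matrix (Fin m) (Fin n) ℂ) :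
    Matrix (Fin p × Fin m) (Fin p × Fin n) ℂ :=
  Matrix.of fun jr kc => A (jr.1 - kc.1) jr.2 kc.2

/-- The tensor T-product. -/
def tmul {m n s p : ℕ} (A : Fin p → Matrix (Fin m) (Fin n) ℂ)
    (B : Fin p → Matrix (Fin n) (Fin s) ℂ) : Fin p → Matrix (Fin m) (Fin s) ℂ :=
  fun i => ∑ j : Fin p, A (i - j) * B j

/-- The identity tensor. -/
def tId {n p : ℕ} [NeZero p] : Fin p → Matrix (Fin n) (Fin n) ℂ :=
  fun i => if i = 0 then 1 else 0

/-- T-product powers of a tensor. -/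
def tpow {n p : ℕ} [NeZero p] (A : Fin p → Matrix (Fin n) (Fin n) ℂ) : ℕ → Fin p → Matrix (Fin n) (Fin n) ℂ
  | 0 => tId
  | k + 1 => tmul (tpow A k) A

/-- Conjugate transpose of a tensor. -/
def tconjT {m n p : ℕ} [NeZero p] (A : Fin p → Matrix (Fin m) (Fin n) ℂ) :
    Fin p → Matrix (Fin n) (Fin m) ℂ :=
  fun i => (A (-i))ᴴ

/-- Invertibility with respect to the T-product. -/
def TInvertible {n p : ℕ} [NeZero p] (A : Fin p → Matrix (Fin n) (Fin n) ℂ) : Prop :=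
  ∃ B, tmul A B = tId ∧ tmul B A = tId

/-- `fold` of an `np × n` matrix back into a tensor (first block column). -/
def tfold {n p : ℕ} [NeZero p] (M : Matrix (Fin p × Fin n) (Fin p × Fin n) ℂ) :
    Fin p → Matrix (Fin n) (Fin n) ℂ :=
  fun i => Matrix.of fun r c => M (i, r) ((0 : Fin p), c)

/-- The primitive root ω = e^{-2πi/p}. -/
def tomega (p : ℕ) : ℂ := Complex.exp (-2 * Real.pi * Complex.I / p)

/-- The (unitary) discrete Fourier matrix. -/
def fourierMat (p : ℕ) : Matrix (Fin p) (Fin p) ℂ :=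
  Matrix.of fun j k => tomega p ^ ((j : ℕ) * (k : ℕ)) / Real.sqrt p

/-- Block diagonal matrix with `p` diagonal blocks of size `n × n`. -/
def bdiag {n p : ℕ} (B : Fin p → Matrix (Fin n) (Fin n) ℂ) :
    Matrix (Fin p × Fin n) (Fin p × Fin n) ℂ :=
  Matrix.of fun jr kc => if jr.1 = kc.1 then B jr.1 jr.2 kc.2 else 0

open Filter Topology
open scoped NNReal ENNReal

section BlockCirculant

variable {n p : ℕ} [NeZero p]

theorem bcirc_tmul (A B : Fin p → Matrix (Fin n) (Fin n) ℂ) :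
    bcirc (tmul A B) = bcirc A * bcirc B := by
  ext ⟨j, r⟩ ⟨k, c⟩
  simp only [bcirc, tmul, Matrix.mul_apply, Matrix.of_apply, Matrix.sum_apply,
    Fintype.sum_prod_type]
  refine Fintype.sum_equiv (Equiv.addRight k) _ _ fun i => ?_
  simp only [Equiv.coe_addRight, add_sub_cancel_right, sub_sub, add_comm k i]

theorem bcirc_tId : bcirc (tId : Fin p → Matrix (Fin n) (Fin n) ℂ) = 1 := by
  ext ⟨j, r⟩ ⟨k, c⟩
  by_cases hjk : j = k <;> simp [bcirc, tId, Matrix.one_apply, sub_eq_zero, hjk]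

theorem bcirc_tpow (A : Fin p → Matrix (Fin n) (Fin n) ℂ) (k : ℕ) :
    bcirc (tpow A k) = bcirc A ^ k := by
  induction k with
  | zero => exact bcirc_tId
  | succ k ih => rw [tpow, bcirc_tmul, ih, pow_succ]

theorem tfold_bcirc (A : Fin p → Matrix (Fin n) (Fin n) ℂ) : tfold (bcirc A) = A := by
  ext i r c
  simp [tfold, bcirc]

theorem tpow_eq_tfold_bcirc_pow (A : Fin p → Matrix (Fin n) (Fin n) ℂ) (k : ℕ) :
    tpow A k = tfold (bcirc A ^ k) := by
  rw [← bcirc_tpow, tfold_bcirc]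

variable (n p) in
def tfoldLinearMap :
    Matrix (Fin p × Fin n) (Fin p × Fin n) ℂ →ₗ[ℂ] Fin p → Matrix (Fin n) (Fin n) ℂ :=
  { toFun := tfold, map_add' := fun _ _ => rfl, map_smul' := fun _ _ => rfl }

end BlockCirculant

theorem eventually_norm_pow_le_of_spectralRadius_lt {A : Type*} [NormedRing A]
    [NormedAlgebra ℂ A] [CompleteSpace A] (x : A) {t : ℝ≥0} (ht : spectralRadius ℂ x < t) :
    ∀ᶠ k in atTop, ‖x ^ k‖ ≤ t ^ k := by
  have hgelfand := spectrum.pow_nnnorm_pow_one_div_tendsto_nhds_spectralRadius x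
  filter_upwards [hgelfand.eventually_lt_const ht, eventually_ge_atTop 1] with k hk hk1
  rw [one_div, ENNReal.rpow_inv_lt_iff (by positivity), ENNReal.rpow_natCast] at hk
  have : ‖x ^ k‖₊ < t ^ k := by exact_mod_cast hk
  exact_mod_cast this.le

theorem summable_smul_pow_of_forall_norm_lt {A : Type*} [NormedRing A] [NormedAlgebra ℂ A]
    [CompleteSpace A] (x : A) (a : ℕ → ℂ) (ρ : ℝ)
    (hρ : ∀ z : ℂ, ‖z‖ < ρ → Summable fun k => a k * z ^ k)
    (hspec : ∀ μ ∈ spectrum ℂ x, ‖μ‖ < ρ) :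
    Summable fun k => a k • x ^ k := by
  nontriviality A
  obtain ⟨μ, hμ, hμ_max⟩ :=
    spectrum.exists_nnnorm_eq_spectralRadius_of_nonempty (spectrum.nonempty x)
  obtain ⟨t, hμt, htρ⟩ := exists_between (hspec μ hμ)
  lift t to ℝ≥0 using (norm_nonneg μ).trans hμt.le
  have hrad : spectralRadius ℂ x < t := by
    rw [← hμ_max]
    exact_mod_cast hμt
  have hsum : Summable fun k => ‖a k‖ * (t : ℝ) ^ k := by
    simpa using (hρ t (by simpa using htρ)).norm
  refine hsum.of_norm_bounded_eventually_nat ?_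
  filter_upwards [eventually_norm_pow_le_of_spectralRadius_lt x hrad] with k hk
  rw [norm_smul]
  gcongr

theorem exists_aeval_eq_of_hasSum {𝕜 A : Type*} [NontriviallyNormedField 𝕜]
    [CompleteSpace 𝕜] [Ring A] [Algebra 𝕜 A] [TopologicalSpace A] [IsTopologicalAddGroup A]
    [ContinuousSMul 𝕜 A] [T2Space A] [FiniteDimensional 𝕜 A] {x S : A} {a : ℕ → 𝕜}
    (h : HasSum (fun k => a k • x ^ k) S) :
    ∃ q : 𝕜[X], aeval x q = S := by
  have hclosed := (Subalgebra.toSubmodule (Algebra.adjoin 𝕜 {x})).closed_of_finiteDimensional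
  have hS : S ∈ Algebra.adjoin 𝕜 {x} :=
    hclosed.mem_of_tendsto h.tendsto_sum_nat <| Eventually.of_forall fun m =>
      Subalgebra.sum_mem _ fun k _ =>
        Subalgebra.smul_mem _ (Subalgebra.pow_mem _ (Algebra.self_mem_adjoin_singleton 𝕜 x) k) _
  rwa [Algebra.adjoin_singleton_eq_range_aeval] at hS

theorem spectrum_aeval_eq_image_of_eqOn {𝕜 A : Type*} [Field 𝕜] [IsAlgClosed 𝕜] [Ring A]
    [Algebra 𝕜 A] [FiniteDimensional 𝕜 A] (x : A) (q : 𝕜[X]) {f : 𝕜 → 𝕜}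
    (hf : Set.EqOn (fun μ => q.eval μ) f (spectrum 𝕜 x)) :
    spectrum 𝕜 (aeval x q) = f '' spectrum 𝕜 x := by
  rcases subsingleton_or_nontrivial A with _ | _
  · simp [spectrum.of_subsingleton]
  · rw [spectrum.map_polynomial_aeval_of_nonempty x q
      (spectrum.nonempty_of_isAlgClosed_of_finiteDimensional 𝕜 x), hf.image_eq]

namespace Matrix

variable {ι : Type*} [Fintype ι] [DecidableEq ι]

theorem exists_mulVec_eq_smul_of_mem_spectrum {K : Type*} [Field K] {M : Matrix ι ι K} {μ : K}
    (hμ : μ ∈ spectrum K M) : ∃ v ≠ 0, M *ᵥ v = μ • v := by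
  rw [← spectrum_toLin', ← Module.End.hasEigenvalue_iff_mem_spectrum] at hμ
  obtain ⟨v, hv⟩ := hμ.exists_hasEigenvector
  exact ⟨v, hv.2, hv.apply_eq_smul⟩

theorem summable_smul_pow_of_forall_norm_lt (M : Matrix ι ι ℂ) (a : ℕ → ℂ) (ρ : ℝ)
    (hρ : ∀ z : ℂ, ‖z‖ < ρ → Summable fun k => a k * z ^ k)
    (hspec : ∀ μ ∈ spectrum ℂ M, ‖μ‖ < ρ) :
    Summable fun k => a k • M ^ k :=
  letI : NormedRing (Matrix ι ι ℂ) := Matrix.linftyOpNormedRing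
  letI : NormedAlgebra ℂ (Matrix ι ι ℂ) := Matrix.linftyOpNormedAlgebra
  _root_.summable_smul_pow_of_forall_norm_lt M a ρ hρ hspec

section Eigenvector

variable {R : Type*} [CommRing R] {M : Matrix ι ι R} {μ : R} {v : ι → R}

theorem pow_mulVec_eq_smul (hv : M *ᵥ v = μ • v) (k : ℕ) :
    (M ^ k) *ᵥ v = μ ^ k • v := by
  induction k with
  | zero => simp
  | succ k ih =>
    rw [pow_succ', ← mulVec_mulVec, ih, mulVec_smul, hv, smul_smul, ← pow_succ]

theorem aeval_mulVec_eq_smul (hv : M *ᵥ v = μ • v) (q : R[X]) :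
    aeval M q *ᵥ v = q.eval μ • v := by
  induction q using Polynomial.induction_on' with
  | add p q hp hq => simp [add_mulVec, hp, hq, add_smul]
  | monomial k c =>
    rw [aeval_monomial, ← Algebra.smul_def, smul_mulVec, pow_mulVec_eq_smul hv, smul_smul,
      eval_monomial]

theorem mulVec_eq_smul_of_hasSum [TopologicalSpace R] [IsTopologicalRing R] [T2Space R]
    {a : ℕ → R} {S : Matrix ι ι R} {s : R} (hS : HasSum (fun k => a k • M ^ k) S)
    (hs : HasSum (fun k => a k * μ ^ k) s) (hv : M *ᵥ v = μ • v) :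
    S *ᵥ v = s • v := by
  have hSv : HasSum (fun k => (a k • M ^ k) *ᵥ v) (S *ᵥ v) :=
    hS.map (mulVec.addMonoidHomLeft v) (continuous_id.matrix_mulVec continuous_const)
  simp only [smul_mulVec, pow_mulVec_eq_smul hv, smul_smul] at hSv
  exact hSv.unique (hs.smul_const v)

end Eigenvector

theorem spectrum_tsum_smul_pow (M : Matrix ι ι ℂ) (a : ℕ → ℂ)
    (hsum : Summable fun k => a k • M ^ k)
    (hsc : ∀ μ ∈ spectrum ℂ M, Summable fun k => a k * μ ^ k) :
    spectrum ℂ (∑' k, a k • M ^ k) = (fun μ => ∑' k, a k * μ ^ k) '' spectrum ℂ M := by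
  obtain ⟨q, hq⟩ := exists_aeval_eq_of_hasSum hsum.hasSum
  rw [← hq]
  refine spectrum_aeval_eq_image_of_eqOn M q fun μ hμ => ?_
  obtain ⟨v, hv0, hv⟩ := exists_mulVec_eq_smul_of_mem_spectrum hμ
  have hq_eigen := aeval_mulVec_eq_smul hv q
  rw [hq, mulVec_eq_smul_of_hasSum hsum.hasSum (hsc μ hμ).hasSum hv] at hq_eigen
  exact smul_left_injective ℂ hv0 hq_eigen.symm

end Matrix

/-- tensor power series convergence: if every T-eigenvalue of `A`
lies strictly inside the convergence radius of `Σ aₖ z^k`, then the tensor power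
series converges and the T-eigenvalues of the limit are `Σ aₖ λ^k`. -/
theorem tensor_power_series_convergence {n p : ℕ} [NeZero p]
    (A : Fin p → Matrix (Fin n) (Fin n) ℂ) (a : ℕ → ℂ) (ρ : ℝ)
    (hρ : ∀ z : ℂ, ‖z‖ < ρ → Summable fun k => a k * z ^ k)
    (hspec : ∀ μ ∈ spectrum ℂ (bcirc A), ‖μ‖ < ρ) :
    (Summable fun k => a k • tpow A k) ∧
      (Summable fun k => a k • (bcirc A) ^ k) ∧
      spectrum ℂ (∑' k : ℕ, a k • (bcirc A) ^ k) =
        (fun μ => ∑' k : ℕ, a k * μ ^ k) '' spectrum ℂ (bcirc A) := by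
  have hsum := (bcirc A).summable_smul_pow_of_forall_norm_lt a ρ hρ hspec
  refine ⟨?_, hsum, (bcirc A).spectrum_tsum_smul_pow a hsum fun μ hμ => hρ μ (hspec μ hμ)⟩
  refine (hsum.map (tfoldLinearMap n p) (LinearMap.continuous_of_finiteDimensional _)).congr
    fun k => ?_
  rw [Function.comp_apply, map_smul, tpow_eq_tfold_bcirc_pow]
  rfl
end
end

section
/- (Cayley–Hamilton for the T-product) Let A ∈ C^{n×n×p} with Fourier block diagonalization bcirc(A) = (F_p^H ⊗ I_n) diag(D₁,...,D_p)(F_p ⊗ I_n), and let P_T(x) := lcm(P_{D₁}(x),...,P_{D_p}(x)) be the T-characteristic polynomial, where P_{Dᵢ} is the characteristic polynomial of Dᵢ. Then P_T(A) = O, where P_T is applied to A as a tensor polynomial in the T-product. -/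
open Matrix Kronecker Complex Polynomial

noncomputable section

/-- The tensor T-function induced by a scalar polynomial (by Hermite interpolation,
a function defined on the spectrum of `bcirc A` acts as a polynomial):
`f(A) = fold (f(bcirc A) · Ê₁)`. -/
def tfun {n p : ℕ} [NeZero p] (q : Polynomial ℂ)
    (A : Fin p → Matrix (Fin n) (Fin n) ℂ) : Fin p → Matrix (Fin n) (Fin n) ℂ :=
  tfold (Polynomial.aeval (bcirc A) q)

/-
Conjugation by the unitary matrix `Fᴴ ⊗ I` is an algebra automorphism and `bdiag` is an algebra
homomorphism, so for `q = lcm P_{Dᵢ}` we get `q(bcirc A) = (Fᴴ ⊗ I) bdiag(q(D₁), …, q(D_p)) (F ⊗ I)`.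
Every `q(Dᵢ)` vanishes by the Cayley–Hamilton theorem since `P_{Dᵢ} ∣ q`, hence `q(bcirc A) = 0`,
and so does its first block column `tfun q A`.
-/

def bdiagAlgHom (n p : ℕ) :
    (Fin p → Matrix (Fin n) (Fin n) ℂ) →ₐ[ℂ] Matrix (Fin p × Fin n) (Fin p × Fin n) ℂ :=
  { (reindexAlgEquiv ℂ ℂ (Equiv.prodComm (Fin n) (Fin p))).toRingHom.comp
      (blockDiagonalRingHom (Fin n) (Fin p) ℂ) with
    commutes' := fun c => by
      simp [Algebra.algebraMap_eq_smul_one, blockDiagonal_smul, submatrix_smul,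
        submatrix_one _ Prod.swap_injective] }

theorem bdiagAlgHom_apply {n p : ℕ} (B : Fin p → Matrix (Fin n) (Fin n) ℂ) :
    bdiagAlgHom n p B = bdiag B := by
  ext ⟨j, r⟩ ⟨k, c⟩
  simp [bdiagAlgHom, bdiag, blockDiagonal_apply]

theorem tomega_eq_inv_exp (p : ℕ) : tomega p = (cexp (2 * Real.pi * I / p))⁻¹ := by
  rw [tomega, ← Complex.exp_neg]
  ring_nf

theorem tomega_isPrimitiveRoot (p : ℕ) [NeZero p] : IsPrimitiveRoot (tomega p) p :=
  tomega_eq_inv_exp p ▸ (Complex.isPrimitiveRoot_exp p (NeZero.ne p)).inv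

theorem star_tomega (p : ℕ) [NeZero p] : star (tomega p) = (tomega p)⁻¹ :=
  (Complex.inv_eq_conj ((tomega_isPrimitiveRoot p).norm'_eq_one (NeZero.ne p))).symm

theorem IsPrimitiveRoot.sum_pow_mul_inv_pow_pow {K : Type*} [Field K] {ζ : K} {p : ℕ}
    (hζ : IsPrimitiveRoot ζ p) (j k : Fin p) :
    ∑ l : Fin p, (ζ ^ (j : ℕ) * (ζ ^ (k : ℕ))⁻¹) ^ (l : ℕ) = if j = k then (p : K) else 0 := by
  have hζ0 : ζ ≠ 0 := hζ.ne_zero (Fin.pos j).ne'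
  split_ifs with hjk
  · simp [hjk, hζ0]
  · have hx1 : ζ ^ (j : ℕ) * (ζ ^ (k : ℕ))⁻¹ ≠ 1 := fun h =>
      hjk (Fin.ext (hζ.pow_inj j.isLt k.isLt (mul_inv_eq_one₀ (pow_ne_zero _ hζ0) |>.mp h)))
    have hxp : (ζ ^ (j : ℕ) * (ζ ^ (k : ℕ))⁻¹) ^ p = 1 := by
      rw [mul_pow, inv_pow, ← pow_mul, ← pow_mul, mul_comm (j : ℕ), mul_comm (k : ℕ), pow_mul,
        pow_mul, hζ.pow_eq_one, one_pow, one_pow, inv_one, mul_one]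
    rw [Fin.sum_univ_eq_sum_range (fun l => (ζ ^ (j : ℕ) * (ζ ^ (k : ℕ))⁻¹) ^ l),
      geom_sum_eq hx1, hxp, sub_self, zero_div]

theorem fourierMat_mem_unitaryGroup (p : ℕ) [NeZero p] :
    fourierMat p ∈ unitaryGroup (Fin p) ℂ := by
  have hp : ((Real.sqrt p : ℂ)) * (Real.sqrt p : ℂ) = p := by
    rw [← Complex.ofReal_mul, Real.mul_self_sqrt (Nat.cast_nonneg p), Complex.ofReal_natCast]
  rw [mem_unitaryGroup_iff]
  ext j k
  have hentry : ∀ l, fourierMat p j l * star (fourierMat p) l k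
      = (tomega p ^ (j : ℕ) * (tomega p ^ (k : ℕ))⁻¹) ^ (l : ℕ) / p := fun l => by
    simp only [fourierMat, star_apply, of_apply, star_div₀, star_pow, star_tomega,
      Complex.star_def, Complex.conj_ofReal]
    rw [div_mul_div_comm, hp, mul_pow, inv_pow, inv_pow, ← pow_mul, ← pow_mul]
  rw [mul_apply, Finset.sum_congr rfl fun l _ => hentry l, ← Finset.sum_div,
    (tomega_isPrimitiveRoot p).sum_pow_mul_inv_pow_pow, one_apply]
  split_ifs <;> simp [NeZero.ne p]

/-- Cayley–Hamilton for the T-product: the T-characteristic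
polynomial, the lcm of the characteristic polynomials of the Fourier diagonal
blocks, annihilates `A`. -/
theorem t_cayley_hamilton {n p : ℕ} [NeZero p]
    (A D : Fin p → Matrix (Fin n) (Fin n) ℂ)
    (h : bcirc A = ((fourierMat p)ᴴ ⊗ₖ (1 : Matrix (Fin n) (Fin n) ℂ)) * bdiag D *
        (fourierMat p ⊗ₖ (1 : Matrix (Fin n) (Fin n) ℂ))) :
    tfun (Finset.univ.lcm fun i => (D i).charpoly) A = 0 := by
  set q := Finset.univ.lcm fun i => (D i).charpoly
  have hD : aeval D q = 0 := funext fun i => by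
    rw [aeval_pi_apply₂]
    exact aeval_eq_zero_of_dvd_aeval_eq_zero (Finset.dvd_lcm (Finset.mem_univ i))
      (aeval_self_charpoly (D i))
  let U : unitary (Matrix (Fin p × Fin n) (Fin p × Fin n) ℂ) :=
    ⟨(fourierMat p)ᴴ ⊗ₖ 1,
      kronecker_mem_unitary (Unitary.star_mem (fourierMat_mem_unitaryGroup p)) (one_mem _)⟩
  have hA : bcirc A = Unitary.conjStarAlgAut ℂ _ U (bdiagAlgHom n p D) := by
    simp [h, bdiagAlgHom_apply, U, star_eq_conjTranspose, conjTranspose_kronecker]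
  have hbcirc : aeval (bcirc A) q = 0 := by
    rw [hA, aeval_algHom_apply, aeval_algHom_apply, hD, map_zero, map_zero]
  rw [tfun, hbcirc]
  rfl

end
end
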